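/- Let G = (V, E) be a finite digraph and s, t ∈ V with s ≠ t. For a set A of out-neighbors of s, let f(A) denote the maximum cardinality of a set of pairwise edge-disjoint directed paths from s to t each of whose first arc is (s, v) for some v ∈ A. If A ⊆ B are sets of out-neighbors of s and v is an out-neighbor of s with v ∉ B and f(A ∪ {v}) = f(A), then f(B ∪ {v}) = f(B). -/

import Mathlib

/-- The list of arcs traversed by a path given as a list of vertices. -/
def pathArcs {V : Type*} (p : List V) : List (V × V) := p.zip p.tail

/-- `p` is a directed path from `s` to `t` in the digraph with arc set `E`:
a nonempty list of pairwise distinct vertices, starting at `s`, ending at `t`,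
with consecutive vertices joined by arcs of `E`. -/
def IsPath {V : Type*} (E : Finset (V × V)) (s t : V) (p : List V) : Prop :=
  p.Nodup ∧ p.Chain' (fun u v => (u, v) ∈ E) ∧ p.head? = some s ∧ p.getLast? = some t

/-- Two paths are edge-disjoint if they share no arc. -/
def EdgeDisjoint {V : Type*} (p q : List V) : Prop :=
  ∀ a : V × V, a ∈ pathArcs p → a ∉ pathArcs q

/-- Two `s`–`t` paths are internally node-disjoint if the only vertices they share
are `s` and `t`. -/
def IntDisjoint {V : Type*} (s t : V) (p q : List V) : Prop :=
  ∀ v : V, v ∈ p → v ∈ q → v = s ∨ v = t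

/-- `P` is a set of pairwise edge-disjoint directed paths from `s` to `t`. -/
def IsEdgeDisjointFamily {V : Type*} (E : Finset (V × V)) (s t : V)
    (P : Finset (List V)) : Prop :=
  (∀ p ∈ P, IsPath E s t p) ∧ (P : Set (List V)).Pairwise EdgeDisjoint

/-- `P` is a set of pairwise internally node-disjoint directed paths from `s` to `t`. -/
def IsNodeDisjointFamily {V : Type*} (E : Finset (V × V)) (s t : V)
    (P : Finset (List V)) : Prop :=
  (∀ p ∈ P, IsPath E s t p) ∧ (P : Set (List V)).Pairwise (IntDisjoint s t)

/-- `fMax E s t A` is the maximum cardinality of a set of pairwise edge-disjoint directed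
paths from `s` to `t` each of whose first arc is `(s, v)` for some `v ∈ A`. -/
noncomputable def fMax {V : Type*} (E : Finset (V × V)) (s t : V) (A : Finset V) : ℕ :=
  sSup {n | ∃ P : Finset (List V), P.card = n ∧ IsEdgeDisjointFamily E s t P ∧
    ∀ p ∈ P, ∃ v ∈ A, (pathArcs p).head? = some (s, v)}

/-!
By Menger's theorem, `fMax E s t S` is the minimum capacity of an `s`–`t` cut in `net E s S`, the
digraph `E` with the arcs leaving `s` restricted to those entering `S`. Let `X` be a minimum cut
for `insert v A`. As `f(A ∪ {v}) = f(A)` is at most the capacity of `X` for `A`, the arc `(s, v)`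
does not leave `X`. For a minimum cut `Y` for `B`, the cut `X ∪ Y` for `insert v B` then has
capacity at most that of `Y`: cut capacities are submodular, the source arcs into `B \ A` leave
`X ∩ Y` at least as often as `X`, and `f(A)` is at most the capacity of `X ∩ Y` for `A`.
-/

open Finset

section Paths

variable {V : Type*}

@[simp] lemma pathArcs_nil : pathArcs ([] : List V) = [] := rfl

@[simp] lemma pathArcs_singleton (a : V) : pathArcs [a] = [] := rfl

@[simp] lemma pathArcs_cons_cons (a b : V) (l : List V) :
    pathArcs (a :: b :: l) = (a, b) :: pathArcs (b :: l) := rfl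

lemma isChain_iff_forall_mem_pathArcs {r : V → V → Prop} {p : List V} :
    p.IsChain r ↔ ∀ a ∈ pathArcs p, r a.1 a.2 := by
  induction p with
  | nil => simp
  | cons a l ih =>
    cases l with
    | nil => simp
    | cons b l => simp [List.isChain_cons_cons, ih]

lemma eq_cons_cons_of_head?_pathArcs {p : List V} {a b : V}
    (h : (pathArcs p).head? = some (a, b)) : ∃ l, p = a :: b :: l := by
  rcases p with _ | ⟨x, _ | ⟨y, l⟩⟩ <;> simp_all

lemma exists_crossing_arc {p : List V} {W : Finset V} {s t : V}
    (hh : p.head? = some s) (hl : p.getLast? = some t) (hs : s ∈ W) (ht : t ∉ W) :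
    ∃ a ∈ pathArcs p, a.1 ∈ W ∧ a.2 ∉ W := by
  induction p generalizing s with
  | nil => simp at hh
  | cons a l ih =>
    obtain rfl : a = s := by simpa using hh
    cases l with
    | nil => exact absurd (by simpa using hl : a = t) (ne_of_mem_of_not_mem hs ht)
    | cons b m =>
      by_cases hb : b ∈ W
      · obtain ⟨e, he, hcross⟩ := ih rfl (by simpa using hl) hb
        exact ⟨e, by simp [he], hcross⟩
      · exact ⟨(a, b), by simp, hs, hb⟩

variable {E E' : Finset (V × V)} {s t : V} {p : List V}

lemma IsPath.mem_of_mem_pathArcs (hp : IsPath E s t p) {a : V × V} (ha : a ∈ pathArcs p) :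
    a ∈ E :=
  isChain_iff_forall_mem_pathArcs.1 hp.2.1 a ha

lemma IsPath.mono (h : E ⊆ E') (hp : IsPath E s t p) : IsPath E' s t p :=
  ⟨hp.1, hp.2.1.imp fun _ _ hab => h hab, hp.2.2⟩

lemma IsPath.exists_eq_cons_cons (hp : IsPath E s t p) (hst : s ≠ t) :
    ∃ u l, p = s :: u :: l := by
  obtain ⟨-, -, hh, hl⟩ := hp
  rcases p with _ | ⟨a, _ | ⟨u, l⟩⟩
  · simp at hh
  · simp only [List.head?_cons, List.getLast?_singleton, Option.some.injEq] at hh hl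
    exact absurd (hh.symm.trans hl) hst
  · exact ⟨u, l, by simp_all⟩

lemma exists_isPath_of_reflTransGen
    (h : Relation.ReflTransGen (fun x y => (x, y) ∈ E) s t) : ∃ p, IsPath E s t p := by
  induction h using Relation.ReflTransGen.head_induction_on with
  | refl => exact ⟨[t], List.nodup_singleton t, List.isChain_singleton t, rfl, rfl⟩
  | @head x y hxy _ ih =>
    obtain ⟨p, hnd, hch, hh, hl⟩ := ih
    by_cases hx : x ∈ p
    · -- shortcut the cycle through `x`
      obtain ⟨l₁, l₂, rfl⟩ := List.append_of_mem hx
      exact ⟨x :: l₂, hnd.sublist (List.sublist_append_right _ _), hch.right_of_append, rfl,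
        by rwa [List.getLast?_append_cons] at hl⟩
    · obtain ⟨l, rfl⟩ : ∃ l, p = y :: l := by
        rcases p with _ | ⟨a, l⟩ <;> simp_all
      exact ⟨x :: y :: l, List.nodup_cons.2 ⟨hx, hnd⟩, List.isChain_cons_cons.2 ⟨hxy, hch⟩,
        rfl, by simpa using hl⟩

variable [Fintype V]

open Classical in
noncomputable def reachable (R : Finset (V × V)) (s : V) : Finset V :=
  {w | Relation.ReflTransGen (fun x y => (x, y) ∈ R) s w}

lemma mem_reachable {R : Finset (V × V)} {s w : V} :
    w ∈ reachable R s ↔ Relation.ReflTransGen (fun x y => (x, y) ∈ R) s w := by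
  simp [reachable]

lemma snd_mem_reachable {R : Finset (V × V)} {s : V} {a : V × V} (ha : a ∈ R)
    (h : a.1 ∈ reachable R s) : a.2 ∈ reachable R s :=
  mem_reachable.2 ((mem_reachable.1 h).tail ha)

end Paths

section Cuts

variable {V : Type*} [DecidableEq V] {N N' M : Finset (V × V)}

def cutCap (N : Finset (V × V)) (W : Finset V) : ℕ := #{a ∈ N | a.1 ∈ W ∧ a.2 ∉ W}

lemma cutCap_mono (h : N ⊆ N') (W : Finset V) : cutCap N W ≤ cutCap N' W :=
  card_le_card (filter_subset_filter _ h)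

lemma cutCap_eq_add_cutCap_sdiff (h : N ⊆ N') (W : Finset V) :
    cutCap N' W = cutCap N W + cutCap (N' \ N) W := by
  rw [cutCap, cutCap, cutCap, ← card_union_of_disjoint
    (disjoint_filter_filter disjoint_sdiff_self_right), ← filter_union, union_sdiff_of_subset h]

lemma cutCap_anti {W₁ W₂ : Finset V} (hM : ∀ a ∈ M, a.1 ∈ W₁) (h : W₁ ⊆ W₂) :
    cutCap M W₂ ≤ cutCap M W₁ :=
  card_le_card fun a ha => by
    rw [mem_filter] at ha ⊢
    exact ⟨ha.1, hM a ha.1, fun h' => ha.2.2 (h h')⟩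

lemma cutCap_union_add_cutCap_inter_le (N : Finset (V × V)) (X Y : Finset V) :
    cutCap N (X ∪ Y) + cutCap N (X ∩ Y) ≤ cutCap N X + cutCap N Y := by
  simp only [cutCap, card_filter, ← sum_add_distrib]
  refine sum_le_sum fun a _ => ?_
  by_cases h1 : a.1 ∈ X <;> by_cases h2 : a.1 ∈ Y <;> by_cases h3 : a.2 ∈ X <;>
    by_cases h4 : a.2 ∈ Y <;> simp [h1, h2, h3, h4]

lemma IsEdgeDisjointFamily.card_le_cutCap {s t : V} {P : Finset (List V)}
    (hP : IsEdgeDisjointFamily N s t P) {W : Finset V} (hs : s ∈ W) (ht : t ∉ W) :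
    P.card ≤ cutCap N W := by
  refine card_le_card_of_forall_subsingleton (fun p a => a ∈ pathArcs p) (fun p hp => ?_)
    fun a _ p hp q hq => by_contra fun hpq => hP.2 hp.1 hq.1 hpq a hp.2 hq.2
  obtain ⟨-, -, hh, hl⟩ := hP.1 p hp
  obtain ⟨a, ha, hcross⟩ := exists_crossing_arc hh hl hs ht
  exact ⟨a, mem_filter.2 ⟨(hP.1 p hp).mem_of_mem_pathArcs ha, hcross⟩, ha⟩

end Cuts

section Flows

variable {V : Type*} [DecidableEq V]

def netInflow (F : Finset (V × V)) (w : V) : ℤ := #{a ∈ F | a.2 = w} - #{a ∈ F | a.1 = w}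

/-- The value of the flow is `-netInflow F s`. -/
def IsFlow (s t : V) (F : Finset (V × V)) : Prop := ∀ w, w ≠ s → w ≠ t → netInflow F w = 0

def residualArcs (N F : Finset (V × V)) : Finset (V × V) := (N \ F) ∪ F.image Prod.swap

lemma netInflow_union {F G : Finset (V × V)} (h : Disjoint F G) (w : V) :
    netInflow (F ∪ G) w = netInflow F w + netInflow G w := by
  simp only [netInflow, filter_union, card_union_of_disjoint (disjoint_filter_filter h)]
  push_cast
  ring

lemma netInflow_sdiff {F G : Finset (V × V)} (h : G ⊆ F) (w : V) :
    netInflow (F \ G) w = netInflow F w - netInflow G w := by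
  rw [eq_sub_iff_add_eq, ← netInflow_union disjoint_sdiff_self_left, sdiff_union_of_subset h]

lemma netInflow_image_swap (F : Finset (V × V)) (w : V) :
    netInflow (F.image Prod.swap) w = -netInflow F w := by
  simp only [netInflow, filter_image, card_image_of_injective _ Prod.swap_injective]
  simp only [Prod.fst_swap, Prod.snd_swap]
  ring

lemma netInflow_singleton (a : V × V) (w : V) :
    netInflow {a} w = (if a.2 = w then 1 else 0) - (if a.1 = w then 1 else 0) := by
  simp only [netInflow, filter_singleton]
  split_ifs <;> simp

lemma IsPath.netInflow_pathArcs {E : Finset (V × V)} {s t : V} {p : List V}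
    (hp : IsPath E s t p) (w : V) :
    netInflow (pathArcs p).toFinset w = (if w = t then 1 else 0) - (if w = s then 1 else 0) := by
  obtain ⟨hnd, hch, hh, hl⟩ := hp
  induction p generalizing s with
  | nil => simp at hh
  | cons a l ih =>
    obtain rfl : a = s := by simpa using hh
    cases l with
    | nil =>
      obtain rfl : a = t := by simpa using hl
      simp [netInflow]
    | cons u l =>
      have hsu : (a, u) ∉ pathArcs (u :: l) := fun h =>
        (List.nodup_cons.1 hnd).1 (List.of_mem_zip h).1
      rw [pathArcs_cons_cons, List.toFinset_cons, insert_eq,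
        netInflow_union (disjoint_singleton_left.2 (by simpa using hsu)), netInflow_singleton,
        ih hnd.of_cons (List.isChain_cons_cons.1 hch).2 rfl (by simpa using hl)]
      simp only [eq_comm (a := w)]
      ring

lemma sum_netInflow (F : Finset (V × V)) (W : Finset V) :
    ∑ w ∈ W, netInflow F w = #{a ∈ F | a.1 ∉ W ∧ a.2 ∈ W} - cutCap F W := by
  simp only [netInflow, cutCap, natCast_card_filter, ← sum_sub_distrib]
  rw [sum_comm]
  refine sum_congr rfl fun a _ => ?_
  rw [sum_sub_distrib, sum_ite_eq, sum_ite_eq]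
  by_cases h1 : a.1 ∈ W <;> by_cases h2 : a.2 ∈ W <;> simp [h1, h2]

variable {s t : V} {F N : Finset (V × V)}

lemma IsFlow.netInflow_source_eq (hF : IsFlow s t F) {W : Finset V} (hs : s ∈ W) (ht : t ∉ W) :
    netInflow F s = #{a ∈ F | a.1 ∉ W ∧ a.2 ∈ W} - cutCap F W := by
  rw [← sum_netInflow,
    sum_eq_single_of_mem s hs fun w hw hws => hF w hws (ne_of_mem_of_not_mem hw ht)]

lemma IsPath.toFinset_pathArcs_subset {p : List V} (hp : IsPath F s t p) :
    (pathArcs p).toFinset ⊆ F :=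
  fun _ ha => hp.mem_of_mem_pathArcs (List.mem_toFinset.1 ha)

lemma IsFlow.sdiff_pathArcs (hF : IsFlow s t F) {p : List V} (hp : IsPath F s t p) :
    IsFlow s t (F \ (pathArcs p).toFinset) := fun w hws hwt => by
  rw [netInflow_sdiff hp.toFinset_pathArcs_subset, hF w hws hwt, hp.netInflow_pathArcs]
  simp [hws, hwt]

lemma IsEdgeDisjointFamily.insert_of_sdiff_pathArcs (hst : s ≠ t) {p : List V}
    (hp : IsPath F s t p) {P : Finset (List V)}
    (hP : IsEdgeDisjointFamily (F \ (pathArcs p).toFinset) s t P) :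
    IsEdgeDisjointFamily F s t (insert p P) ∧ p ∉ P := by
  obtain ⟨hPpath, hPdisj⟩ := hP
  have hdisj : ∀ q ∈ P, EdgeDisjoint p q := fun q hq a ha haq =>
    (mem_sdiff.1 ((hPpath q hq).mem_of_mem_pathArcs haq)).2 (List.mem_toFinset.2 ha)
  obtain ⟨u, l, rfl⟩ := hp.exists_eq_cons_cons hst
  refine ⟨⟨fun q hq => ?_, ?_⟩, fun h => hdisj _ h (s, u) (by simp) (by simp)⟩
  · rcases mem_insert.1 hq with rfl | hq
    exacts [hp, (hPpath q hq).mono sdiff_subset]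
  · rw [coe_insert, Set.pairwise_insert]
    exact ⟨hPdisj, fun q hq _ => ⟨hdisj q hq, fun a haq ha => hdisj q hq a ha haq⟩⟩

lemma IsFlow.augment (hst : s ≠ t) (hF : IsFlow s t F) (hFN : F ⊆ N) {q : List V}
    (hq : IsPath (residualArcs N F) s t q) :
    ∃ F', IsFlow s t F' ∧ F' ⊆ N ∧ netInflow F' s = netInflow F s - 1 := by
  set Aq := (pathArcs q).toFinset
  set fwd := {a ∈ Aq | a ∈ N \ F}
  set bwd := {a ∈ Aq | a ∉ N \ F}
  have hbwd : bwd.image Prod.swap ⊆ F := by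
    intro a ha
    obtain ⟨b, hb, rfl⟩ := mem_image.1 ha
    rw [mem_filter] at hb
    rcases mem_union.1 (hq.toFinset_pathArcs_subset hb.1) with h | h
    · exact absurd h hb.2
    · obtain ⟨c, hc, rfl⟩ := mem_image.1 h
      simpa using hc
  have hdisj : Disjoint (F \ bwd.image Prod.swap) fwd := disjoint_left.2 fun a ha ha' =>
    (mem_sdiff.1 (mem_filter.1 ha').2).2 (mem_sdiff.1 ha).1
  have hsplit : ∀ w, netInflow Aq w = netInflow fwd w + netInflow bwd w := fun w => by
    rw [← netInflow_union (disjoint_filter_filter_not Aq Aq _), filter_union_filter_not_eq]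
  have hF' : ∀ w, netInflow ((F \ bwd.image Prod.swap) ∪ fwd) w
      = netInflow F w + ((if w = t then 1 else 0) - (if w = s then 1 else 0)) := fun w => by
    rw [netInflow_union hdisj, netInflow_sdiff hbwd, netInflow_image_swap,
      ← hq.netInflow_pathArcs, hsplit]
    ring
  refine ⟨(F \ bwd.image Prod.swap) ∪ fwd, fun w hws hwt => ?_,
    union_subset (sdiff_subset.trans hFN) ?_, ?_⟩
  · simp [hF', hF w hws hwt, hws, hwt]
  · exact fun a ha => (mem_sdiff.1 (mem_filter.1 ha).2).1
  · simp [hF', hst, sub_eq_add_neg]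

variable [Fintype V]

lemma IsFlow.reflTransGen_of_netInflow_neg (hF : IsFlow s t F) (h : netInflow F s < 0) :
    Relation.ReflTransGen (fun x y => (x, y) ∈ F) s t := by
  by_contra hnr
  have hcut : cutCap F (reachable F s) = 0 := by
    rw [cutCap, card_eq_zero, filter_eq_empty_iff]
    exact fun a ha hcross => hcross.2 (snd_mem_reachable ha hcross.1)
  have := hF.netInflow_source_eq (mem_reachable.2 .refl) (mt mem_reachable.1 hnr)
  omega

lemma IsFlow.exists_edgeDisjointFamily (hst : s ≠ t) (hF : IsFlow s t F) :
    ∃ P, IsEdgeDisjointFamily F s t P ∧ -netInflow F s ≤ P.card := by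
  induction F using Finset.strongInduction with
  | H F ih =>
    by_cases hval : 0 ≤ netInflow F s
    · exact ⟨∅, ⟨by simp, by simp⟩, by simpa⟩
    obtain ⟨p, hp⟩ := exists_isPath_of_reflTransGen (hF.reflTransGen_of_netInflow_neg (by omega))
    have hpF := hp.toFinset_pathArcs_subset
    obtain ⟨u, l, rfl⟩ := hp.exists_eq_cons_cons hst
    obtain ⟨P, hP, hcard⟩ :=
      ih _ (sdiff_ssubset hpF ⟨(s, u), by simp⟩) (hF.sdiff_pathArcs hp)
    obtain ⟨hP', hnotin⟩ := hP.insert_of_sdiff_pathArcs hst hp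
    refine ⟨_, hP', ?_⟩
    rw [netInflow_sdiff hpF, hp.netInflow_pathArcs] at hcard
    simp only [hst, if_false, if_true] at hcard
    rw [card_insert_of_notMem hnotin]
    push_cast
    omega

/-- The nontrivial half of Menger's theorem for arc-disjoint paths, by augmenting paths. -/
theorem exists_cutCap_le_card_edgeDisjointFamily (N : Finset (V × V)) (hst : s ≠ t) :
    ∃ W, s ∈ W ∧ t ∉ W ∧ ∃ P, IsEdgeDisjointFamily N s t P ∧ cutCap N W ≤ P.card := by
  classical
  obtain ⟨F, hF, hmax⟩ := (N.powerset.filter (IsFlow s t)).exists_min_image (netInflow · s)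
    ⟨∅, mem_filter.2 ⟨empty_mem_powerset N, fun w _ _ => by simp [netInflow]⟩⟩
  obtain ⟨hFN, hF⟩ := mem_filter.1 hF
  replace hFN := mem_powerset.1 hFN
  set W := reachable (residualArcs N F) s
  have htW : t ∉ W := fun ht => by
    obtain ⟨q, hq⟩ := exists_isPath_of_reflTransGen (mem_reachable.1 ht)
    obtain ⟨F', hF', hF'N, hval⟩ := hF.augment hst hFN hq
    have := hmax F' (mem_filter.2 ⟨mem_powerset.2 hF'N, hF'⟩)
    omega
  -- no residual arc leaves `W`: the flow saturates every arc of `N` leaving `W`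
  -- and uses no arc entering it
  have hout : cutCap N W = cutCap F W := by
    refine le_antisymm (card_le_card fun a ha => ?_) (card_le_card (filter_subset_filter _ hFN))
    rw [mem_filter] at ha ⊢
    by_contra haF
    exact ha.2.2 (snd_mem_reachable (mem_union_left _ (mem_sdiff.2 ⟨ha.1, fun h => haF ⟨h, ha.2⟩⟩))
      ha.2.1)
  have hin : #{a ∈ F | a.1 ∉ W ∧ a.2 ∈ W} = 0 := by
    rw [card_eq_zero, filter_eq_empty_iff]
    exact fun a ha hcross => hcross.1
      (snd_mem_reachable (mem_union_right _ (mem_image_of_mem Prod.swap ha)) hcross.2)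
  obtain ⟨P, hP, hcard⟩ := hF.exists_edgeDisjointFamily hst
  refine ⟨W, mem_reachable.2 .refl, htW, P, ⟨fun p hp => (hP.1 p hp).mono hFN, hP.2⟩, ?_⟩
  have := hF.netInflow_source_eq (mem_reachable.2 .refl) htW
  rw [hin, ← hout] at this
  omega

end Flows

section FirstArcs

variable {V : Type*} [DecidableEq V] (E : Finset (V × V)) {s t : V}

/-- A path from `s` leaves `s` only through its first arc, so the paths counted by
`fMax E s t S` are exactly the `s`–`t` paths of `net E s S` (when `s ≠ t`). -/
def net (s : V) (S : Finset V) : Finset (V × V) := {a ∈ E | a.1 = s → a.2 ∈ S}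

variable {E}

lemma net_mono {S T : Finset V} (h : S ⊆ T) : net E s S ⊆ net E s T :=
  monotone_filter_right E fun _ _ hS hs => h (hS hs)

lemma fst_eq_of_mem_net_sdiff {S T : Finset V} {a : V × V} (ha : a ∈ net E s T \ net E s S) :
    a.1 = s := by
  by_contra h
  simp_all [net]

lemma net_insert_sdiff_subset {A B : Finset V} (hAB : A ⊆ B) (v : V) :
    net E s (insert v B) \ net E s B ⊆ net E s (insert v A) \ net E s A := by
  intro a ha
  simp only [net, mem_sdiff, mem_filter, mem_insert] at ha ⊢
  grind

lemma IsPath.net {u : V} {l : List V} {S : Finset V} (hp : IsPath E s t (s :: u :: l))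
    (hu : u ∈ S) : IsPath (net E s S) s t (s :: u :: l) := by
  refine ⟨hp.1, isChain_iff_forall_mem_pathArcs.2 fun a ha => ?_, hp.2.2⟩
  refine mem_filter.2 ⟨hp.mem_of_mem_pathArcs ha, fun has => ?_⟩
  rcases List.mem_cons.1 (pathArcs_cons_cons s u l ▸ ha) with rfl | ha
  · exact hu
  · exact absurd (has ▸ (List.of_mem_zip ha).1) (List.nodup_cons.1 hp.1).1

lemma fMax_le_cutCap_net (S : Finset V) {W : Finset V} (hs : s ∈ W) (ht : t ∉ W) :
    fMax E s t S ≤ cutCap (net E s S) W := by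
  refine csSup_le ⟨0, ∅, rfl, ⟨by simp, by simp⟩, by simp⟩ ?_
  rintro _ ⟨P, rfl, hP, hfirst⟩
  refine IsEdgeDisjointFamily.card_le_cutCap ⟨fun p hp => ?_, hP.2⟩ hs ht
  obtain ⟨u, hu, hhead⟩ := hfirst p hp
  obtain ⟨l, rfl⟩ := eq_cons_cons_of_head?_pathArcs hhead
  exact (hP.1 _ hp).net hu

lemma card_le_fMax (hst : s ≠ t) {S : Finset V} {P : Finset (List V)}
    (hP : IsEdgeDisjointFamily (net E s S) s t P) : P.card ≤ fMax E s t S := by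
  have hbdd : BddAbove {n | ∃ P : Finset (List V), P.card = n ∧ IsEdgeDisjointFamily E s t P ∧
      ∀ p ∈ P, ∃ v ∈ S, (pathArcs p).head? = some (s, v)} := by
    refine ⟨cutCap E {s}, ?_⟩
    rintro _ ⟨P, rfl, hP, -⟩
    exact hP.card_le_cutCap (mem_singleton_self s) (by simpa using hst.symm)
  refine le_csSup hbdd ⟨P, rfl, ⟨fun p hp => (hP.1 p hp).mono (filter_subset _ _), hP.2⟩, ?_⟩
  intro p hp
  obtain ⟨u, l, rfl⟩ := (hP.1 p hp).exists_eq_cons_cons hst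
  exact ⟨u, (mem_filter.1 ((hP.1 _ hp).mem_of_mem_pathArcs (a := (s, u)) (by simp))).2 rfl, rfl⟩

lemma cutCap_net_insert_union_le {A B X Y : Finset V} {v : V} (hAB : A ⊆ B)
    (hsX : s ∈ X) (hsY : s ∈ Y)
    (hX : cutCap (net E s (insert v A)) X ≤ cutCap (net E s A) (X ∩ Y)) :
    cutCap (net E s (insert v B)) (X ∪ Y) ≤ cutCap (net E s B) Y := by
  have hsrc : ∀ {S T : Finset V}, ∀ a ∈ net E s T \ net E s S, a.1 ∈ X ∩ Y := fun a ha =>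
    fst_eq_of_mem_net_sdiff ha ▸ mem_inter.2 ⟨hsX, hsY⟩
  have hB' := cutCap_eq_add_cutCap_sdiff (net_mono (E := E) (s := s) (subset_insert v B)) (X ∪ Y)
  have hA' := cutCap_eq_add_cutCap_sdiff (net_mono (E := E) (s := s) (subset_insert v A)) X
  have hBX := cutCap_eq_add_cutCap_sdiff (net_mono (E := E) (s := s) hAB) X
  have hBXY := cutCap_eq_add_cutCap_sdiff (net_mono (E := E) (s := s) hAB) (X ∩ Y)
  have hv : cutCap (net E s (insert v B) \ net E s B) (X ∪ Y)
      ≤ cutCap (net E s (insert v A) \ net E s A) X :=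
    (cutCap_mono (net_insert_sdiff_subset hAB v) _).trans
      (cutCap_anti (fun a ha => inter_subset_left (hsrc a ha)) subset_union_left)
  have hBA : cutCap (net E s B \ net E s A) X ≤ cutCap (net E s B \ net E s A) (X ∩ Y) :=
    cutCap_anti hsrc inter_subset_left
  have := cutCap_union_add_cutCap_inter_le (net E s B) X Y
  omega

variable [Fintype V]

lemma exists_cutCap_net_le_fMax (hst : s ≠ t) (S : Finset V) :
    ∃ W, s ∈ W ∧ t ∉ W ∧ cutCap (net E s S) W ≤ fMax E s t S := by
  obtain ⟨W, hs, ht, P, hP, hcut⟩ := exists_cutCap_le_card_edgeDisjointFamily (net E s S) hst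
  exact ⟨W, hs, ht, hcut.trans (card_le_fMax hst hP)⟩

lemma fMax_mono (hst : s ≠ t) {S T : Finset V} (h : S ⊆ T) : fMax E s t S ≤ fMax E s t T := by
  obtain ⟨W, hs, ht, hW⟩ := exists_cutCap_net_le_fMax hst T
  exact (fMax_le_cutCap_net S hs ht).trans ((cutCap_mono (net_mono h) W).trans hW)

end FirstArcs

theorem fMax_failed_arc_stays_failed_general {V : Type*} [Fintype V] [DecidableEq V]
    (E : Finset (V × V)) (s t : V) (hst : s ≠ t)
    (A B : Finset V) (v : V)
    (hAB : A ⊆ B)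
    (h : fMax E s t (insert v A) = fMax E s t A) :
    fMax E s t (insert v B) = fMax E s t B := by
  obtain ⟨X, hsX, htX, hX⟩ := exists_cutCap_net_le_fMax hst (insert v A)
  obtain ⟨Y, hsY, htY, hY⟩ := exists_cutCap_net_le_fMax hst B
  have hXY : cutCap (net E s (insert v A)) X ≤ cutCap (net E s A) (X ∩ Y) :=
    (hX.trans h.le).trans
      (fMax_le_cutCap_net A (mem_inter.2 ⟨hsX, hsY⟩) fun ht => htX (mem_inter.1 ht).1)
  refine le_antisymm ?_ (fMax_mono hst (subset_insert v B))
  calc fMax E s t (insert v B)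
      ≤ cutCap (net E s (insert v B)) (X ∪ Y) :=
        fMax_le_cutCap_net _ (mem_union_left Y hsX) (by simp [htX, htY])
    _ ≤ cutCap (net E s B) Y := cutCap_net_insert_union_le hAB hsX hsY hXY
    _ ≤ fMax E s t B := hY

/-- If `A ⊆ B` are sets of out-neighbors of `s`, `v` is an out-neighbor of `s` not in
`B`, and adding `v` to `A` does not increase `f`, then adding `v` to `B` does not
increase `f` either. -/
theorem fMax_failed_arc_stays_failed {V : Type*} [Fintype V] [DecidableEq V]
    (E : Finset (V × V)) (s t : V) (hst : s ≠ t)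
    (A B : Finset V) (v : V)
    (hA : ∀ u ∈ A, (s, u) ∈ E) (hB : ∀ u ∈ B, (s, u) ∈ E) (hv : (s, v) ∈ E)
    (hAB : A ⊆ B) (hvB : v ∉ B)
    (h : fMax E s t (insert v A) = fMax E s t A) :
    fMax E s t (insert v B) = fMax E s t B :=
  fMax_failed_arc_stays_failed_general E s t hst A B v hAB h
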